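/- For every nonnegative integer k, every nonnegative real number r, and all positive real numbers ℓ and N, there exists a real number N* ≥ N such that the following holds. Let (G,φ) be a (0,ℓ]-bounded weighted graph, let S ⊆ V(G) with |S| ≤ k, let Z ⊆ N_{(G,φ)}^{≤r}[S], let m be a positive integer, let R ⊆ V(G), let c_Z : Z → {1,…,m}, and let c be an m-coloring of (G,φ)^ℓ − (R ∪ Z) with weak diameter in (G,φ)^ℓ at most N. Then the m-coloring c ∪ c_Z|_{Z−R} of (G,φ)^ℓ − R has weak diameter in (G,φ)^ℓ at most N*. -/

import Mathlib

open scoped ENNReal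

/-- The length of a walk in an edge-weighted graph: the sum of the weights of its edges. -/
def walkLen {V : Type} {G : SimpleGraph V} (w : Sym2 V → ℝ) {x y : V} (p : G.Walk x y) : ℝ :=
  (p.edges.map w).sum

/-- The distance between two vertices of an edge-weighted graph: the infimum of the lengths
of paths between them (`⊤` if there is no such path). -/
noncomputable def wDist {V : Type} (G : SimpleGraph V) (w : Sym2 V → ℝ) (x y : V) : ℝ≥0∞ :=
  ⨅ q : {q : G.Walk x y // q.IsPath}, ENNReal.ofReal (walkLen w q.1)

lemma wDist_comm {V : Type} (G : SimpleGraph V) (w : Sym2 V → ℝ) (x y : V) :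
    wDist G w x y = wDist G w y x := by
  have key : ∀ a b : V, wDist G w a b ≤ wDist G w b a := by
    intro a b
    refine le_iInf fun q => ?_
    refine iInf_le_of_le ⟨q.1.reverse, q.2.reverse⟩ ?_
    simp [walkLen, List.sum_reverse]
  exact le_antisymm (key x y) (key y x)

/-- The power graph: two distinct vertices are adjacent iff their weighted distance
is at most `r`. -/
noncomputable def powerGraph {V : Type} (G : SimpleGraph V) (w : Sym2 V → ℝ) (r : ℝ) :
    SimpleGraph V where
  Adj x y := x ≠ y ∧ wDist G w x y ≤ ENNReal.ofReal r
  symm := ⟨by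
    rintro x y ⟨hne, hle⟩
    exact ⟨hne.symm, by rwa [wDist_comm]⟩⟩
  loopless := ⟨fun x h => h.1 rfl⟩

/-- The unit-length (hop) distance in an unweighted graph. -/
noncomputable def hopDist {V : Type} (L : SimpleGraph V) (x y : V) : ℝ≥0∞ :=
  ⨅ q : L.Walk x y, (q.length : ℝ≥0∞)

/-- Same-colour adjacency within a vertex set `A`. -/
def colorGraph {V : Type} (K : SimpleGraph V) (A : Set V) {m : ℕ} (c : V → Fin m) :
    SimpleGraph V where
  Adj x y := K.Adj x y ∧ x ∈ A ∧ y ∈ A ∧ c x = c y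
  symm := ⟨by
    rintro x y ⟨h, hx, hy, hc⟩
    exact ⟨h.symm, hy, hx, hc.symm⟩⟩
  loopless := ⟨fun x h => K.loopless.irrefl x h.1⟩

/-- The colouring `c` of the subgraph of `K` induced on `A` has weak diameter, measured by the
hop distance of `L`, at most `N`: any two vertices of a monochromatic component of `K ↾ A` are
at hop distance at most `N` in `L`. -/
def HasWeakDiamLE {V : Type} (K : SimpleGraph V) (A : Set V) (L : SimpleGraph V) {m : ℕ}
    (c : V → Fin m) (N : ℝ) : Prop :=
  ∀ x ∈ A, ∀ y ∈ A, (colorGraph K A c).Reachable x y → hopDist L x y ≤ ENNReal.ofReal N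

/-- `nbhd G w r S`: vertices joined to `S` by a path of weighted length at most `r`. -/
def nbhd {V : Type} (G : SimpleGraph V) (w : Sym2 V → ℝ) (r : ℝ) (S : Set V) : Set V :=
  {v | ∃ s ∈ S, ∃ q : G.Walk v s, q.IsPath ∧ walkLen w q ≤ r}

/-- Deleting a set of vertices (keeping them as isolated vertices of the ambient type). -/
def delVerts {V : Type} (G : SimpleGraph V) (Z : Set V) : SimpleGraph V where
  Adj x y := G.Adj x y ∧ x ∉ Z ∧ y ∉ Z
  symm := ⟨by
    rintro x y ⟨h, hx, hy⟩
    exact ⟨h.symm, hy, hx⟩⟩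
  loopless := ⟨fun x h => G.loopless.irrefl x h.1⟩

/-- A weighted graph: a finite simple graph together with positive edge weights. -/
structure WGraph : Type 1 where
  V : Type
  fin : Finite V
  G : SimpleGraph V
  w : Sym2 V → ℝ
  pos : ∀ e ∈ G.edgeSet, 0 < w e

/-- The extended metric on the vertex set of a weighted graph. -/
noncomputable def WGraph.dist (W : WGraph) : W.V → W.V → ℝ≥0∞ := wDist W.G W.w

/-- All edge weights lie in `(0, ℓ]`. -/
def WGraph.IsBounded (W : WGraph) (ℓ : ℝ) : Prop := ∀ e ∈ W.G.edgeSet, W.w e ≤ ℓ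

/-- `f` is an `n`-dimensional control function for the extended metric `d`. -/
def IsControlOn {X : Type} (d : X → X → ℝ≥0∞) (n : ℕ) (f : ℝ → ℝ) : Prop :=
  ∀ r : ℝ, 0 < r → ∃ U : Fin (n + 1) → Set (Set X),
    (∀ x : X, ∃ i, ∃ s ∈ U i, x ∈ s) ∧
    (∀ i, ∀ s ∈ U i, ∀ t ∈ U i, s ≠ t → ∀ x ∈ s, ∀ y ∈ t, ENNReal.ofReal r < d x y) ∧
    (∀ i, ∀ s ∈ U i, ∀ x ∈ s, ∀ y ∈ s, d x y ≤ ENNReal.ofReal (f r))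

/-- The asymptotic dimension of a class of weighted graphs is at most `n`. -/
def asdimLE (F : Set WGraph) (n : ℕ) : Prop :=
  ∃ f : ℝ → ℝ, (∀ x, 0 < x → 0 < f x) ∧ ∀ W ∈ F, IsControlOn W.dist n f

/-- The Assouad–Nagata dimension of a class of weighted graphs is at most `n`:
some dilation is a common `n`-dimensional control function. -/
def ANdimLE (F : Set WGraph) (n : ℕ) : Prop :=
  ∃ (f : ℝ → ℝ) (c : ℝ), 0 < c ∧ (∀ x, 0 < x → 0 < f x) ∧ (∀ x, 0 < x → f x ≤ c * x) ∧
    ∀ W ∈ F, IsControlOn W.dist n f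

/-- `H` is a minor of `G`: there are pairwise disjoint nonempty connected branch sets in `G`,
one for each vertex of `H`, with branch sets of adjacent vertices joined by an edge. -/
def IsMinorOf {α β : Type} (H : SimpleGraph β) (G : SimpleGraph α) : Prop :=
  ∃ B : β → Set α,
    (∀ h, (B h).Nonempty) ∧
    (∀ h h', h ≠ h' → Disjoint (B h) (B h')) ∧
    (∀ h, (G.induce (B h)).Connected) ∧
    (∀ h h', H.Adj h h' → ∃ a ∈ B h, ∃ b ∈ B h', G.Adj a b)

/-! A path of weight `λ` in an `ℓ`-bounded graph crosses at most `⌊2λ/ℓ⌋ + 1` hops of the power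
graph, so every vertex of `Z` lies within `t = ⌊2r/ℓ⌋ + 1` hops of an anchor in `S`. Along a
monochromatic walk of the new colouring, the stretches avoiding `Z` are monochromatic for the old
colouring and hence have at most `N` hops; so the anchors of consecutive visits to `Z` are within
`2t + N + 2` hops of each other, and as there are at most `k` anchors, any two anchors met along
the walk are within `k (2t + N + 2)` hops. -/

open SimpleGraph

lemma SimpleGraph.edist_le_add_of_le {V : Type*} {H : SimpleGraph V} {x y z : V} {a b : ℕ}
    (h₁ : H.edist x y ≤ a) (h₂ : H.edist y z ≤ b) : H.edist x z ≤ (a + b : ℕ) := by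
  push_cast
  exact H.edist_triangle.trans (add_le_add h₁ h₂)

section WeightedWalks

variable {V : Type} {G : SimpleGraph V} {w : Sym2 V → ℝ} {ℓ : ℝ} {x y z : V}

lemma walkLen_nil : walkLen w (Walk.nil : G.Walk x x) = 0 := by
  simp [walkLen]

lemma walkLen_cons (h : G.Adj x y) (p : G.Walk y z) :
    walkLen w (Walk.cons h p) = w s(x, y) + walkLen w p := by
  simp [walkLen]

lemma walkLen_nonneg (hw : ∀ e ∈ G.edgeSet, 0 ≤ w e) (p : G.Walk x y) : 0 ≤ walkLen w p :=
  List.sum_nonneg fun _ hx => by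
    obtain ⟨e, he, rfl⟩ := List.mem_map.1 hx
    exact hw e (p.edges_subset_edgeSet he)

lemma wDist_le_walkLen (hw : ∀ e ∈ G.edgeSet, 0 ≤ w e) (p : G.Walk x y) :
    wDist G w x y ≤ ENNReal.ofReal (walkLen w p) := by
  classical
  refine (iInf_le _ ⟨p.bypass, p.bypass_isPath⟩).trans (ENNReal.ofReal_le_ofReal ?_)
  refine (p.edges_bypass_sublist_edges.map w).sum_le_sum fun _ hx => ?_
  obtain ⟨e, he, rfl⟩ := List.mem_map.1 hx
  exact hw e (p.edges_subset_edgeSet he)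

lemma edist_powerGraph_le_one (hw : ∀ e ∈ G.edgeSet, 0 ≤ w e) (p : G.Walk x y)
    (hp : walkLen w p ≤ ℓ) : (powerGraph G w ℓ).edist x y ≤ 1 := by
  rw [edist_le_one_iff_adj_or_eq]
  by_cases hxy : x = y
  · exact Or.inr hxy
  · exact Or.inl ⟨hxy, (wDist_le_walkLen hw p).trans (ENNReal.ofReal_le_ofReal hp)⟩

/-- Greedy cutting: a maximal prefix of length at most `ℓ` is one hop, and once the next edge
overshoots, two hops have consumed more than `ℓ` of the walk. -/
lemma exists_prefix_edist_powerGraph_le (hw : ∀ e ∈ G.edgeSet, 0 ≤ w e)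
    (hb : ∀ e ∈ G.edgeSet, w e ≤ ℓ) (hℓ : 0 ≤ ℓ) (q : G.Walk x y) :
    ∃ (a : V) (p : G.Walk x a) (m : ℕ), walkLen w p ≤ ℓ ∧
      (powerGraph G w ℓ).edist a y ≤ m ∧ m * ℓ + 2 * walkLen w p ≤ 2 * walkLen w q := by
  induction q with
  | nil => exact ⟨_, Walk.nil, 0, by simpa [walkLen_nil] using hℓ, by simp, by simp⟩
  | @cons x b y h q ih =>
    obtain ⟨a, p, m, hpℓ, ham, hm⟩ := ih
    by_cases hfits : w s(x, b) + walkLen w p ≤ ℓ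
    · refine ⟨a, Walk.cons h p, m, by rwa [walkLen_cons], ham, ?_⟩
      rw [walkLen_cons, walkLen_cons]
      linarith
    · have hxb' : (powerGraph G w ℓ).edist x b ≤ 1 :=
        edist_powerGraph_le_one hw (Walk.cons h Walk.nil)
          (by simpa [walkLen_cons, walkLen_nil] using hb _ (G.mem_edgeSet.2 h))
      have hba := edist_powerGraph_le_one hw p hpℓ
      refine ⟨x, Walk.nil, m + 2, by simpa [walkLen_nil] using hℓ, ?_, ?_⟩
      · exact (edist_le_add_of_le (by exact_mod_cast hxb')
          (edist_le_add_of_le (by exact_mod_cast hba) ham)).trans_eq (by push_cast; ring)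
      · rw [walkLen_cons, walkLen_nil]
        push_cast
        linarith

lemma edist_powerGraph_le_of_walkLen_le (hw : ∀ e ∈ G.edgeSet, 0 ≤ w e)
    (hb : ∀ e ∈ G.edgeSet, w e ≤ ℓ) (hℓ : 0 < ℓ) {r : ℝ} (q : G.Walk x y)
    (hq : walkLen w q ≤ r) : (powerGraph G w ℓ).edist x y ≤ (⌊2 * r / ℓ⌋₊ + 1 : ℕ) := by
  obtain ⟨a, p, m, hpℓ, ham, hm⟩ := exists_prefix_edist_powerGraph_le hw hb hℓ.le q
  have hmr : m ≤ ⌊2 * r / ℓ⌋₊ :=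
    Nat.le_floor ((le_div_iff₀ hℓ).2 (by nlinarith [walkLen_nonneg hw p]))
  rw [add_comm]
  exact edist_le_add_of_le (by exact_mod_cast edist_powerGraph_le_one hw p hpℓ)
    (ham.trans (by exact_mod_cast hmr))

end WeightedWalks

section HopDistance

variable {V : Type} {L : SimpleGraph V} {x y : V}

lemma hopDist_eq_edist : hopDist L x y = L.edist x y := by
  simp [hopDist, SimpleGraph.edist, ENat.toENNReal_iInf]

lemma hopDist_le_ofReal_of_edist_le {n : ℕ} (h : L.edist x y ≤ n) :
    hopDist L x y ≤ ENNReal.ofReal n := by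
  rw [hopDist_eq_edist, ENNReal.ofReal_natCast]
  exact_mod_cast h

lemma edist_le_floor_of_hopDist_le {N : ℝ} (h : hopDist L x y ≤ ENNReal.ofReal N) :
    L.edist x y ≤ ⌊N⌋₊ := by
  rw [hopDist_eq_edist] at h
  induction hxy : L.edist x y using ENat.recTopCoe with
  | top => simp [hxy] at h
  | coe n =>
    rw [hxy, ENat.toENNReal_coe] at h
    rcases Nat.eq_zero_or_pos n with rfl | hn
    · simp
    · exact_mod_cast Nat.le_floor ((ENNReal.natCast_le_ofReal hn.ne').1 h)

end HopDistance

lemma colorGraph_mem_of_reachable_of_ne {V : Type} {K : SimpleGraph V} {A : Set V} {m : ℕ}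
    {c : V → Fin m} {x y : V} (h : (colorGraph K A c).Reachable x y) (hxy : x ≠ y) : x ∈ A := by
  obtain ⟨p⟩ := h
  cases p with
  | nil => exact absurd rfl hxy
  | cons h _ => exact h.2.1

lemma HasWeakDiamLE.edist_le {V : Type} {K L : SimpleGraph V} {A : Set V} {m : ℕ}
    {c : V → Fin m} {N : ℝ} (hc : HasWeakDiamLE K A L c N) {x y : V}
    (h : (colorGraph K A c).Reachable x y) : L.edist x y ≤ ⌊N⌋₊ := by
  by_cases hxy : x = y
  · simp [hxy]
  · exact edist_le_floor_of_hopDist_le <| hc x (colorGraph_mem_of_reachable_of_ne h hxy)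
      y (colorGraph_mem_of_reachable_of_ne h.symm (Ne.symm hxy)) h

section Chains

variable {α V : Type*} {H : SimpleGraph α} {L : SimpleGraph V} (f : α → V) {E : ℕ}

lemma edist_le_length_mul (hf : ∀ a b, H.Adj a b → L.edist (f a) (f b) ≤ E) {a b : α}
    (p : H.Walk a b) : L.edist (f a) (f b) ≤ (p.length * E : ℕ) := by
  induction p with
  | nil => simp
  | cons h p ih =>
    rw [Walk.length_cons, add_mul, one_mul, add_comm]
    exact edist_le_add_of_le (hf _ _ h) ih

lemma SimpleGraph.Reachable.edist_le_card_mul [Finite α]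
    (hf : ∀ a b, H.Adj a b → L.edist (f a) (f b) ≤ E) {a b : α} (h : H.Reachable a b) :
    L.edist (f a) (f b) ≤ (Nat.card α * E : ℕ) := by
  classical
  have := Fintype.ofFinite α
  obtain ⟨p⟩ := h
  refine (edist_le_length_mul f hf p.bypass).trans (Nat.cast_le.2 (Nat.mul_le_mul_right _ ?_))
  exact Nat.card_eq_fintype_card (α := α) ▸ p.bypass_isPath.length_lt.le

end Chains

section Patching

variable {V : Type} {L : SimpleGraph V} {m : ℕ} {c c' : V → Fin m} {R Z S : Set V} {t M : ℕ}

abbrev anchorGraph (L : SimpleGraph V) (S : Set V) (E : ℕ) : SimpleGraph S :=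
  SimpleGraph.fromRel fun s s' : S => L.edist s s' ≤ E

lemma anchorGraph_reachable_of_edist_le {E : ℕ} {s s' : S} (h : L.edist s s' ≤ E) :
    (anchorGraph L S E).Reachable s s' := by
  by_cases hss' : s = s'
  · exact hss' ▸ Reachable.refl s
  · exact Adj.reachable ((fromRel_adj _ s s').2 ⟨hss', Or.inl h⟩)

lemma edist_le_ncard_mul_of_anchorGraph_reachable [Finite S] {E : ℕ} {s s' : S}
    (h : (anchorGraph L S E).Reachable s s') : L.edist s s' ≤ (S.ncard * E : ℕ) := by
  rw [← Nat.card_coe_set_eq]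
  refine h.edist_le_card_mul Subtype.val fun a b hab => ?_
  rcases ((fromRel_adj _ a b).1 hab).2 with hab | hba
  exacts [hab, edist_comm.trans_le hba]

lemma reachable_or_exists_anchors (hZS : ∀ z ∈ Z, ∃ s : S, L.edist z s ≤ t)
    (hM : ∀ u v, (colorGraph L (R ∪ Z)ᶜ c).Reachable u v → L.edist u v ≤ M)
    (hcc' : ∀ v ∈ (R ∪ Z)ᶜ, c' v = c v) {x y : V} (p : (colorGraph L Rᶜ c').Walk x y) :
    (colorGraph L (R ∪ Z)ᶜ c).Reachable x y ∨
      ∃ u, (colorGraph L (R ∪ Z)ᶜ c).Reachable x u ∧ ∃ s s' : S,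
        L.edist u s ≤ (t + 1 : ℕ) ∧ (anchorGraph L S (2 * t + M + 2)).Reachable s s' ∧
        L.edist s' y ≤ (t + M + 1 : ℕ) := by
  induction p with
  | nil => exact Or.inl (Reachable.refl _)
  | @cons x u y h p ih =>
    by_cases hZ : x ∈ Z ∨ u ∈ Z
    · have hxu : L.edist x u ≤ (1 : ℕ) := by
        exact_mod_cast (edist_le_one_iff_adj_or_eq.2 (Or.inl h.1))
      obtain ⟨s, hxs, hus⟩ : ∃ s : S, L.edist x s ≤ (t + 1 : ℕ) ∧ L.edist u s ≤ (t + 1 : ℕ) := by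
        rcases hZ with hx | hu
        · obtain ⟨s, hs⟩ := hZS x hx
          refine ⟨s, hs.trans (by norm_cast; omega), ?_⟩
          rw [edist_comm] at hxu
          exact (edist_le_add_of_le hxu hs).trans_eq (by rw [add_comm])
        · obtain ⟨s, hs⟩ := hZS u hu
          exact ⟨s, edist_le_add_of_le hxu hs |>.trans_eq (by rw [add_comm]),
            hs.trans (by norm_cast; omega)⟩
      rw [edist_comm] at hus
      rcases ih with huy | ⟨u₀, huu₀, s₁, s', hu₀s₁, hs₁s', hs'y⟩
      · exact Or.inr ⟨x, Reachable.refl x, s, s, hxs, Reachable.refl s,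
          (edist_le_add_of_le hus (hM u y huy)).trans (by norm_cast; omega)⟩
      · have hss₁ : L.edist s s₁ ≤ (2 * t + M + 2 : ℕ) :=
          (edist_le_add_of_le hus (edist_le_add_of_le (hM u u₀ huu₀) hu₀s₁)).trans
            (by norm_cast; omega)
        exact Or.inr ⟨x, Reachable.refl x, s, s', hxs,
          (anchorGraph_reachable_of_edist_le hss₁).trans hs₁s', hs'y⟩
    · push Not at hZ
      have hx : x ∈ (R ∪ Z)ᶜ := fun h' => h'.elim h.2.1 hZ.1
      have hu : u ∈ (R ∪ Z)ᶜ := fun h' => h'.elim h.2.2.1 hZ.2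
      have hxu : (colorGraph L (R ∪ Z)ᶜ c).Adj x u :=
        ⟨h.1, hx, hu, by rw [← hcc' x hx, ← hcc' u hu]; exact h.2.2.2⟩
      rcases ih with huy | ⟨u₀, huu₀, rest⟩
      · exact Or.inl (hxu.reachable.trans huy)
      · exact Or.inr ⟨u₀, hxu.reachable.trans huu₀, rest⟩

end Patching

theorem patching_centered_set_general (k : ℕ) (r : ℝ) (ℓ N : ℝ)
    (hℓ : 0 < ℓ) :
    ∃ Nstar : ℝ, N ≤ Nstar ∧
      ∀ W : WGraph, W.IsBounded ℓ →
        ∀ S : Set W.V, S.ncard ≤ k →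
          ∀ Z : Set W.V, Z ⊆ nbhd W.G W.w r S →
            ∀ m : ℕ, 0 < m → ∀ R : Set W.V, ∀ c cZ : W.V → Fin m,
              HasWeakDiamLE (powerGraph W.G W.w ℓ) (R ∪ Z)ᶜ
                (powerGraph W.G W.w ℓ) c N →
              ∀ c' : W.V → Fin m,
                (∀ v ∈ Z \ R, c' v = cZ v) →
                (∀ v ∈ (R ∪ Z)ᶜ, c' v = c v) →
                HasWeakDiamLE (powerGraph W.G W.w ℓ) Rᶜ (powerGraph W.G W.w ℓ) c' Nstar := by
  set M := ⌊N⌋₊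
  set t := ⌊2 * r / ℓ⌋₊ + 1
  refine ⟨(M + (t + 1) + k * (2 * t + M + 2) + (t + M + 1) : ℕ), ?_, ?_⟩
  · exact (Nat.lt_floor_add_one N).le.trans (by norm_cast; omega)
  intro W hW S hS Z hZ m _ R c _ hc c' _ hcc' x _ y _ hxy
  have := W.fin
  have hZS : ∀ z ∈ Z, ∃ s : S, (powerGraph W.G W.w ℓ).edist z s ≤ t := fun z hz => by
    obtain ⟨s, hs, q, -, hq⟩ := hZ hz
    exact ⟨⟨s, hs⟩, edist_powerGraph_le_of_walkLen_le (fun e he => (W.pos e he).le) hW hℓ q hq⟩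
  obtain ⟨p⟩ := hxy
  refine hopDist_le_ofReal_of_edist_le ?_
  rcases reachable_or_exists_anchors hZS (fun _ _ => hc.edist_le) hcc' p with
    hxy | ⟨u, hxu, s, s', hus, hss', hs'y⟩
  · exact (hc.edist_le hxy).trans (by norm_cast; omega)
  · have hss'k : (powerGraph W.G W.w ℓ).edist s s' ≤ (k * (2 * t + M + 2) : ℕ) :=
      (edist_le_ncard_mul_of_anchorGraph_reachable hss').trans (by gcongr)
    exact edist_le_add_of_le (edist_le_add_of_le (edist_le_add_of_le (hc.edist_le hxu) hus)
      hss'k) hs'y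

/-- Theorem (Lemma `patching_centered_set`): colourings of `(G,φ)^ℓ − R` obtained by combining
a colouring of `(G,φ)^ℓ − (R ∪ Z)` of weak diameter in `(G,φ)^ℓ` at most `N` with an arbitrary
colouring of `Z`, where `Z ⊆ N_{(G,φ)}^{≤r}[S]` with `|S| ≤ k`, have weak diameter in
`(G,φ)^ℓ` at most `N*`, where `N* ≥ N` depends only on `k`, `r`, `ℓ` and `N`. -/
theorem patching_centered_set (k : ℕ) (r : ℝ) (hr : 0 ≤ r) (ℓ N : ℝ)
    (hℓ : 0 < ℓ) (hN : 0 < N) :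
    ∃ Nstar : ℝ, N ≤ Nstar ∧
      ∀ W : WGraph, W.IsBounded ℓ →
        ∀ S : Set W.V, S.ncard ≤ k →
          ∀ Z : Set W.V, Z ⊆ nbhd W.G W.w r S →
            ∀ m : ℕ, 0 < m → ∀ R : Set W.V, ∀ c cZ : W.V → Fin m,
              HasWeakDiamLE (powerGraph W.G W.w ℓ) (R ∪ Z)ᶜ
                (powerGraph W.G W.w ℓ) c N →
              ∀ c' : W.V → Fin m,
                (∀ v ∈ Z \ R, c' v = cZ v) →
                (∀ v ∈ (R ∪ Z)ᶜ, c' v = c v) →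
                HasWeakDiamLE (powerGraph W.G W.w ℓ) Rᶜ (powerGraph W.G W.w ℓ) c' Nstar :=
  patching_centered_set_general k r ℓ N hℓ
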